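/- For each root \gamma = e_i - e_j of sl(n) (i \ne j) with |i - j| = d, the number of ways to factor the elementary tensor E_z = e_{z_1} \otimes e_{z_2} associated to a T-pair z of size d and order k as a product E_x E_y with x, y T-pairs of the same sign as z and Ord(x) = Ord(y) = k is exactly d - 1, provided z reverses orientation; and each such factorization has both x and y reversing orientation with C_x = C_y = 1. -/

import Mathlib

/-!
Under a Belavin–Drinfeld triple, `T` is injective on `Γ1` and preserves adjacency, so one step
of `T` carries the support interval of a root onto that of its image either by a translation or
by a reflection; composing, so does `T^k`. If `z = (T^k α, -α)` reverses orientation, `T^k`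
reflects the interval of `α` onto that of `β`, sending each subroot to the mirror subroot.
Matrix units multiply only along matching indices, so a factorization `E_z = E_x E_y` by pairs
of the sign and order of `z` splits `α` at an interior point `m` into `[m, α₂)` for `x` and
`[α₁, m)` for `y`, the `β`'s being the mirror pieces; conversely every one of the `|α| - 1`
interior points gives such a factorization, and its pieces, being mirrored, reverse orientation.
-/

/-- Adjacency of simple roots `α_i`, `α_j` of `sl(n)` (equivalent to
`(α_i, α_j) = -1`): the indices differ by one. -/
def Adj (i j : ℕ) : Prop := i + 1 = j ∨ j + 1 = i

/-- One application of the additive extension of `T` to positive roots.  A positive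
root `e_i - e_j` (`i < j`) is encoded as the pair `(i, j)`; its simple-root support is
`Finset.Ico i j`.  `TStep T Γ1 α β` says that all simple constituents of `α` lie in
`Γ1` and that `T` maps the support of `α` onto the support of `β` (possibly reversing
orientation), i.e. `T α = β`. -/
def TStep (T : ℕ → ℕ) (Γ1 : Finset ℕ) (α β : ℕ × ℕ) : Prop :=
  α.1 < α.2 ∧ β.1 < β.2 ∧ Finset.Ico α.1 α.2 ⊆ Γ1 ∧
    Finset.image T (Finset.Ico α.1 α.2) = Finset.Ico β.1 β.2

/-- `TIter T Γ1 k α β` says `T^k α = β` for positive roots `α`, `β`. -/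
def TIter (T : ℕ → ℕ) (Γ1 : Finset ℕ) : ℕ → ℕ × ℕ → ℕ × ℕ → Prop
  | 0, α, β => α = β
  | k + 1, α, β => ∃ γ, TStep T Γ1 α γ ∧ TIter T Γ1 k γ β

/-- A Belavin–Drinfeld triple of type `A_{n-1}`: `Γ1, Γ2` are subsets of the simple
roots `{1, …, n-1}` of `sl(n)`, `T` restricts to a bijection `Γ1 → Γ2` preserving the
inner product (equivalently, preserving adjacency), and `T` is nilpotent. -/
def BDTriple (n : ℕ) (Γ1 Γ2 : Finset ℕ) (T : ℕ → ℕ) : Prop :=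
  Γ1 ⊆ Finset.Ico 1 n ∧ Γ2 ⊆ Finset.Ico 1 n ∧
    Set.BijOn T ↑Γ1 ↑Γ2 ∧
    (∀ i ∈ Γ1, ∀ j ∈ Γ1, (Adj (T i) (T j) ↔ Adj i j)) ∧
    (∀ i ∈ Γ1, ∃ k, 1 ≤ k ∧ T^[k] i ∉ Γ1)

open Matrix Kronecker

/-- A `T`-pair for a Belavin–Drinfeld triple: the data of a positive root `α` (with
`1 ≤ α.1 < α.2 ≤ n`) and `β = T^k α`.  If `pos = true` this encodes the positive
`T`-pair `(T^k α, -α)` (requiring `k > 0`); if `pos = false` it encodes the negative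
`T`-pair `(-α, T^k α)` (allowing `k = 0`).  `Ord = k` and the size is `|α| = α.2 - α.1`. -/
structure TPair (n : ℕ) (T : ℕ → ℕ) (Γ1 : Finset ℕ) where
  pos : Bool
  k : ℕ
  α : ℕ × ℕ
  β : ℕ × ℕ
  hα : α.1 < α.2
  hlo : 1 ≤ α.1 ∧ 1 ≤ β.1
  hhi : α.2 ≤ n ∧ β.2 ≤ n
  hiter : TIter T Γ1 k α β
  hpos : pos = true → 0 < k

open Fin.NatCast in
/-- The elementary matrix `e_{e_i - e_j} = e_{ij}` attached to a root `e_i - e_j`,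
encoded as the pair `(i, j)` with `1 ≤ i, j ≤ n` (indices taken in `Fin (n+1)`). -/
noncomputable def Eroot (n : ℕ) (p : ℕ × ℕ) : Matrix (Fin (n + 1)) (Fin (n + 1)) ℂ :=
  single (p.1 : Fin (n + 1)) (p.2 : Fin (n + 1)) 1

/-- The elementary tensor `E_x` attached to a `T`-pair `x`: for a positive pair
`(β, -α)` it is `e_β ⊗ e_{-α}`, and for a negative pair `(-α, β)` it is
`e_{-α} ⊗ e_β`, where `e_{-(e_i - e_j)} = e_{ji}`. -/
noncomputable def Epair {n : ℕ} {T : ℕ → ℕ} {Γ1 : Finset ℕ} (x : TPair n T Γ1) :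
    Matrix (Fin (n + 1) × Fin (n + 1)) (Fin (n + 1) × Fin (n + 1)) ℂ :=
  if x.pos then Eroot n x.β ⊗ₖ Eroot n (x.α.2, x.α.1)
  else Eroot n (x.α.2, x.α.1) ⊗ₖ Eroot n x.β

/-- The `T`-pair `x` reverses orientation: `T^k` maps the leftmost simple root of
`α` to the rightmost simple root of `β = T^k α`. -/
def ROrient {n : ℕ} {T : ℕ → ℕ} {Γ1 : Finset ℕ} (x : TPair n T Γ1) : Prop :=
  TIter T Γ1 x.k (x.α.1, x.α.1 + 1) (x.β.2 - 1, x.β.2)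

def IsSubroot (p α : ℕ × ℕ) : Prop := α.1 ≤ p.1 ∧ p.1 < p.2 ∧ p.2 ≤ α.2

/-- The affine map carrying the support of `α` onto that of `β` (of the same size), preserving
the orientation for `rev = false` and reversing it for `rev = true`. -/
def transportPt : Bool → ℕ × ℕ → ℕ × ℕ → ℕ → ℕ
  | false, α, β, u => β.1 + (u - α.1)
  | true, α, β, u => β.2 - 1 - (u - α.1)

def transport : Bool → ℕ × ℕ → ℕ × ℕ → ℕ × ℕ → ℕ × ℕ
  | false, α, β, p => (β.1 + (p.1 - α.1), β.1 + (p.2 - α.1))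
  | true, α, β, p => (β.2 - (p.2 - α.1), β.2 - (p.1 - α.1))

section Transport

variable {α β γ p : ℕ × ℕ}

lemma IsSubroot.transport (hp : IsSubroot p α) (hβ : β.2 - β.1 = α.2 - α.1) (rev : Bool) :
    IsSubroot (transport rev α β p) β := by
  obtain ⟨h1, h2, h3⟩ := hp
  cases rev <;> simp only [IsSubroot, _root_.transport] <;> omega

lemma transport_false_self (hp : IsSubroot p α) : transport false α α p = p := by
  obtain ⟨h1, h2, -⟩ := hp
  simp only [transport, Prod.ext_iff]
  omega

lemma transport_transport (hp : IsSubroot p α) (hγ : γ.2 - γ.1 = α.2 - α.1)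
    (hβ : β.2 - β.1 = α.2 - α.1) (r r' : Bool) :
    transport r' γ β (transport r α γ p) = transport (r != r') α β p := by
  obtain ⟨h1, h2, h3⟩ := hp
  cases r <;> cases r' <;>
    simp only [transport, Prod.ext_iff, bne_self_eq_false, Bool.bne_false, Bool.bne_true,
      Bool.not_false] <;> omega

lemma image_transportPt_Ico (hp : IsSubroot p α) (hβ : β.2 - β.1 = α.2 - α.1) (rev : Bool) :
    (Finset.Ico p.1 p.2).image (transportPt rev α β) =
      Finset.Ico (transport rev α β p).1 (transport rev α β p).2 := by
  obtain ⟨h1, h2, h3⟩ := hp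
  ext u
  simp only [Finset.mem_image, Finset.mem_Ico]
  constructor
  · rintro ⟨v, hv, rfl⟩
    cases rev <;> simp only [transportPt, transport] <;> omega
  · intro hu
    cases rev
    · simp only [transport] at hu
      exact ⟨α.1 + (u - β.1), by omega, by simp only [transportPt]; omega⟩
    · simp only [transport] at hu
      exact ⟨α.1 + (β.2 - 1 - u), by omega, by simp only [transportPt]; omega⟩

end Transport

lemma eq_add_or_add_eq_of_injOn_of_adj {d : ℕ} {f : ℕ → ℕ} (hinj : Set.InjOn f (Set.Iio d))
    (hadj : ∀ t, t + 1 < d → Adj (f t) (f (t + 1))) :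
    (∀ t < d, f t = f 0 + t) ∨ (∀ t < d, f t + t = f 0) := by
  have same_dir : ∀ t, t + 1 < d → (f (t + 1) = f t + 1 ↔ f 1 = f 0 + 1) := by
    intro t
    induction t with
    | zero => simp
    | succ t ih =>
      intro ht
      -- by injectivity two consecutive steps cannot cancel
      have hne : f (t + 1 + 1) ≠ f t := fun he => by
        have := hinj (Set.mem_Iio.2 (by omega : t + 1 + 1 < d)) (Set.mem_Iio.2 (by omega)) he
        omega
      have := hadj t (by omega)
      have := hadj (t + 1) ht
      have := ih (by omega)
      simp only [Adj] at *
      omega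
  by_cases hup : f 1 = f 0 + 1
  · left
    intro t
    induction t with
    | zero => simp
    | succ t ih =>
      intro ht
      have := (same_dir t ht).2 hup
      have := ih (by omega)
      omega
  · right
    intro t
    induction t with
    | zero => simp
    | succ t ih =>
      intro ht
      have := mt (same_dir t ht).1 hup
      have := hadj t ht
      have := ih (by omega)
      simp only [Adj] at *
      omega

section TAction

variable {n : ℕ} {Γ1 Γ2 : Finset ℕ} {T : ℕ → ℕ}

lemma TStep.right_unique {α β β' : ℕ × ℕ} (h : TStep T Γ1 α β) (h' : TStep T Γ1 α β') :
    β = β' := by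
  have hIco : Set.Ico β.1 β.2 = Set.Ico β'.1 β'.2 := by
    rw [← Finset.coe_Ico, ← Finset.coe_Ico, ← h.2.2.2, ← h'.2.2.2]
  obtain ⟨h1, h2⟩ := (Set.Ico_eq_Ico_iff (Or.inl h.2.1)).1 hIco
  exact Prod.ext h1 h2

lemma TIter.right_unique : ∀ {k : ℕ} {α β β' : ℕ × ℕ},
    TIter T Γ1 k α β → TIter T Γ1 k α β' → β = β'
  | 0, _, _, _, h, h' => h.symm.trans h'
  | _ + 1, _, _, _, ⟨_, hs, hi⟩, ⟨_, hs', hi'⟩ => by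
    obtain rfl := hs.right_unique hs'
    exact hi.right_unique hi'

lemma TIter.fst_lt_snd : ∀ {k : ℕ} {α β : ℕ × ℕ}, TIter T Γ1 k α β → α.1 < α.2 → β.1 < β.2
  | 0, _, _, rfl, h => h
  | _ + 1, _, _, ⟨_, hs, hi⟩, _ => hi.fst_lt_snd hs.2.1

lemma TStep.size_eq (hT : BDTriple n Γ1 Γ2 T) {α β : ℕ × ℕ} (hs : TStep T Γ1 α β) :
    β.2 - β.1 = α.2 - α.1 := by
  have hcard := Finset.card_image_of_injOn (hT.2.2.1.injOn.mono (s₁ := ↑(Finset.Ico α.1 α.2))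
    (by exact_mod_cast hs.2.2.1))
  rw [hs.2.2.2] at hcard
  simpa using hcard

lemma TStep.exists_eq_transportPt (hT : BDTriple n Γ1 Γ2 T) {α β : ℕ × ℕ}
    (hs : TStep T Γ1 α β) :
    ∃ rev, ∀ u ∈ Finset.Ico α.1 α.2, T u = transportPt rev α β u := by
  obtain ⟨hα, hβ, hsub, himg⟩ := hs
  have hsize := TStep.size_eq hT ⟨hα, hβ, hsub, himg⟩
  have hmaps : ∀ t < α.2 - α.1, β.1 ≤ T (α.1 + t) ∧ T (α.1 + t) < β.2 := fun t ht => by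
    have := Finset.mem_image_of_mem T (Finset.mem_Ico.2 ⟨by omega, by omega⟩ :
      α.1 + t ∈ Finset.Ico α.1 α.2)
    simpa [himg] using this
  have hsub' : ∀ t < α.2 - α.1, α.1 + t ∈ Γ1 := fun t ht =>
    hsub (Finset.mem_Ico.2 ⟨by omega, by omega⟩)
  have hinj : Set.InjOn (fun t => T (α.1 + t)) (Set.Iio (α.2 - α.1)) := fun s hs t ht he => by
    have := hT.2.2.1.injOn (hsub' s hs) (hsub' t ht) he
    omega
  have hadj : ∀ t, t + 1 < α.2 - α.1 → Adj (T (α.1 + t)) (T (α.1 + (t + 1))) := fun t ht =>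
    (hT.2.2.2.1 _ (hsub' t (by omega)) _ (hsub' (t + 1) ht)).2 (Or.inl (by omega))
  -- the images of the two ends of `α` lie in `β`, of the same size, which fixes the offset
  have h0 := hmaps 0 (by omega)
  have hlast := hmaps (α.2 - α.1 - 1) (by omega)
  rcases eq_add_or_add_eq_of_injOn_of_adj hinj hadj with hfwd | hrev
  · refine ⟨false, fun u hu => ?_⟩
    obtain ⟨hu1, hu2⟩ := Finset.mem_Ico.1 hu
    have hu' := hfwd (u - α.1) (by omega)
    have hlast' := hfwd (α.2 - α.1 - 1) (by omega)
    simp only [transportPt, Nat.add_sub_cancel' hu1, add_zero] at h0 hlast hu' hlast' ⊢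
    omega
  · refine ⟨true, fun u hu => ?_⟩
    obtain ⟨hu1, hu2⟩ := Finset.mem_Ico.1 hu
    have hu' := hrev (u - α.1) (by omega)
    have hlast' := hrev (α.2 - α.1 - 1) (by omega)
    simp only [transportPt, Nat.add_sub_cancel' hu1, add_zero] at h0 hlast hu' hlast' ⊢
    omega

lemma TStep.exists_transport (hT : BDTriple n Γ1 Γ2 T) {α β : ℕ × ℕ} (hs : TStep T Γ1 α β) :
    ∃ rev, ∀ p, IsSubroot p α → TStep T Γ1 p (transport rev α β p) := by
  obtain ⟨rev, hrev⟩ := hs.exists_eq_transportPt hT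
  have hsize := hs.size_eq hT
  refine ⟨rev, fun p hp => ?_⟩
  have hIco : Finset.Ico p.1 p.2 ⊆ Finset.Ico α.1 α.2 := Finset.Ico_subset_Ico hp.1 hp.2.2
  refine ⟨hp.2.1, (hp.transport hsize rev).2.1, hIco.trans hs.2.2.1, ?_⟩
  rw [Finset.image_congr fun u hu => hrev u (hIco hu), image_transportPt_Ico hp hsize]

lemma TIter.exists_transport (hT : BDTriple n Γ1 Γ2 T) :
    ∀ {k : ℕ} {α β : ℕ × ℕ}, TIter T Γ1 k α β → α.1 < α.2 →
      β.2 - β.1 = α.2 - α.1 ∧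
        ∃ rev, ∀ p, IsSubroot p α → TIter T Γ1 k p (transport rev α β p)
  | 0, α, _, rfl, _ => ⟨rfl, false, fun p hp => by rw [transport_false_self hp]; rfl⟩
  | _ + 1, α, β, ⟨γ, hs, hi⟩, hα => by
    have hγ := hs.size_eq hT
    obtain ⟨hβ, r', hr'⟩ := hi.exists_transport hT hs.2.1
    obtain ⟨r, hr⟩ := hs.exists_transport hT
    refine ⟨hβ.trans hγ, r != r', fun p hp => ⟨_, hr p hp, ?_⟩⟩
    rw [← transport_transport hp hγ (hβ.trans hγ)]
    exact hr' _ (hp.transport hγ r)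

end TAction

section TPairs

variable {n : ℕ} {Γ1 Γ2 : Finset ℕ} {T : ℕ → ℕ}

lemma TPair.ext_of_α {x y : TPair n T Γ1} (hpos : x.pos = y.pos) (hk : x.k = y.k)
    (hα : x.α = y.α) : x = y := by
  obtain ⟨pos, k, α, β, _, _, _, hiter, _⟩ := x
  obtain ⟨pos', k', α', β', _, _, _, hiter', _⟩ := y
  subst hpos hk hα
  obtain rfl := hiter.right_unique hiter'
  rfl

lemma TPair.size_β_eq (hT : BDTriple n Γ1 Γ2 T) (x : TPair n T Γ1) :
    x.β.2 - x.β.1 = x.α.2 - x.α.1 :=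
  (x.hiter.exists_transport hT x.hα).1

lemma ROrient.tIter_transport (hT : BDTriple n Γ1 Γ2 T) {z : TPair n T Γ1} (hz : ROrient z)
    (p : ℕ × ℕ) (hp : IsSubroot p z.α) : TIter T Γ1 z.k p (transport true z.α z.β p) := by
  obtain ⟨hsize, rev, hrev⟩ := z.hiter.exists_transport hT z.hα
  have hα := z.hα
  cases rev
  · -- `T^k` also preserves the orientation of `α`, which forces `α` to be a simple root
    have hfirst := (hrev (z.α.1, z.α.1 + 1) ⟨le_rfl, by omega, hα⟩).right_unique hz
    simp only [transport, Prod.ext_iff] at hfirst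
    obtain ⟨_, _, _⟩ := hp
    convert hrev p ⟨by omega, by omega, by omega⟩ using 1
    simp only [transport, Prod.ext_iff]
    omega
  · exact hrev p hp

lemma ROrient.of_isSubroot (hT : BDTriple n Γ1 Γ2 T) {z x : TPair n T Γ1} (hz : ROrient z)
    (hk : x.k = z.k) (hsub : IsSubroot x.α z.α) : ROrient x := by
  have hx : x.β = transport true z.α z.β x.α :=
    x.hiter.right_unique (hk ▸ hz.tIter_transport hT x.α hsub)
  have hsize := z.size_β_eq hT
  obtain ⟨h1, h2, h3⟩ := hsub
  unfold ROrient
  rw [hk]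
  convert hz.tIter_transport hT (x.α.1, x.α.1 + 1) ⟨h1, by omega, by omega⟩ using 1
  rw [hx]
  simp only [transport, Prod.ext_iff, and_true]
  omega

def TPair.restrict (hT : BDTriple n Γ1 Γ2 T) (z : TPair n T Γ1) (hz : ROrient z) (p : ℕ × ℕ)
    (hp : IsSubroot p z.α) : TPair n T Γ1 where
  pos := z.pos
  k := z.k
  α := p
  β := transport true z.α z.β p
  hα := hp.2.1
  hlo := by
    have hsize := z.size_β_eq hT
    have := z.hlo
    obtain ⟨_, _, _⟩ := hp
    simp only [transport]
    omega
  hhi := by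
    have hsize := z.size_β_eq hT
    have := z.hhi
    obtain ⟨_, _, _⟩ := hp
    simp only [transport]
    omega
  hiter := hz.tIter_transport hT p hp
  hpos := z.hpos

end TPairs

namespace Matrix

variable {l m o R : Type*} [DecidableEq l] [DecidableEq m] [DecidableEq o]

lemma single_one_eq_single_one_iff [MulZeroOneClass R] [Nontrivial R] {i i' : l} {j j' : m} :
    single i j (1 : R) = single i' j' 1 ↔ i = i' ∧ j = j' := by
  refine ⟨fun h => ?_, fun ⟨hi, hj⟩ => hi ▸ hj ▸ rfl⟩
  have := congr_fun₂ h i j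
  simp only [single_apply_same, single_apply] at this
  split_ifs at this with hij
  · exact ⟨hij.1.symm, hij.2.symm⟩
  · exact absurd this one_ne_zero

lemma single_one_ne_zero [MulZeroOneClass R] [Nontrivial R] (i : l) (j : m) :
    single i j (1 : R) ≠ 0 := fun h =>
  (one_ne_zero : (1 : R) ≠ 0) (by simpa using congr_fun₂ h i j)

lemma single_one_mul_single_one_eq_iff [Fintype m] [Semiring R] [Nontrivial R] {a e : l}
    {b c : m} {d f : o} :
    single a b (1 : R) * single c d (1 : R) = single e f (1 : R) ↔ b = c ∧ a = e ∧ d = f := by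
  by_cases hbc : b = c
  · subst hbc
    rw [single_mul_single_same, one_mul, single_one_eq_single_one_iff]
    simp
  · rw [single_mul_single_of_ne (h := hbc)]
    simp [hbc, (single_one_ne_zero e f).symm]

end Matrix

open Fin.NatCast in
lemma Fin.natCast_inj_of_le {N u v : ℕ} (hu : u ≤ N) (hv : v ≤ N) :
    (u : Fin (N + 1)) = v ↔ u = v := by
  rw [Fin.ext_iff, Fin.val_cast_of_lt (Nat.lt_succ_of_le hu),
    Fin.val_cast_of_lt (Nat.lt_succ_of_le hv)]

open Matrix Fin.NatCast in
lemma Epair_mul_Epair_eq_iff {n : ℕ} {T : ℕ → ℕ} {Γ1 : Finset ℕ} {x y w : TPair n T Γ1}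
    (hx : x.pos = w.pos) (hy : y.pos = w.pos) :
    Epair x * Epair y = Epair w ↔ x.α.2 = w.α.2 ∧ y.α.1 = w.α.1 ∧ x.α.1 = y.α.2 ∧
      x.β.1 = w.β.1 ∧ y.β.2 = w.β.2 ∧ x.β.2 = y.β.1 := by
  have bounds (v : TPair n T Γ1) : v.α.1 ≤ n ∧ v.α.2 ≤ n ∧ v.β.1 ≤ n ∧ v.β.2 ≤ n := by
    have := v.hα; have := v.hhi; have := v.hiter.fst_lt_snd v.hα; omega
  obtain ⟨_, _, _, _⟩ := bounds x
  obtain ⟨_, _, _, _⟩ := bounds y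
  obtain ⟨_, _, _, _⟩ := bounds w
  cases hw : w.pos <;>
  · simp (disch := omega) only [Epair, Eroot, hx, hy, hw, Bool.false_eq_true, ↓reduceIte,
      single_kronecker_single, mul_one, single_one_mul_single_one_eq_iff, Prod.ext_iff,
      Fin.natCast_inj_of_le]
    tauto

section Factorizations

variable {n : ℕ} {Γ1 Γ2 : Finset ℕ} {T : ℕ → ℕ}

def factorizations (z : TPair n T Γ1) : Set (TPair n T Γ1 × TPair n T Γ1) :=
  {p | p.1.pos = z.pos ∧ p.2.pos = z.pos ∧ p.1.k = z.k ∧ p.2.k = z.k ∧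
    Epair p.1 * Epair p.2 = Epair z}

lemma mem_factorizations_iff {z : TPair n T Γ1} {x y : TPair n T Γ1} :
    (x, y) ∈ factorizations z ↔ x.pos = z.pos ∧ y.pos = z.pos ∧ x.k = z.k ∧ y.k = z.k ∧
      x.α.2 = z.α.2 ∧ y.α.1 = z.α.1 ∧ x.α.1 = y.α.2 ∧
        x.β.1 = z.β.1 ∧ y.β.2 = z.β.2 ∧ x.β.2 = y.β.1 := by
  refine ⟨fun ⟨hx, hy, hkx, hky, hE⟩ => ⟨hx, hy, hkx, hky, (Epair_mul_Epair_eq_iff hx hy).1 hE⟩,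
    fun ⟨hx, hy, hkx, hky, h⟩ => ⟨hx, hy, hkx, hky, (Epair_mul_Epair_eq_iff hx hy).2 h⟩⟩

lemma isSubroot_of_mem_factorizations {z x y : TPair n T Γ1} (hp : (x, y) ∈ factorizations z) :
    IsSubroot x.α z.α ∧ IsSubroot y.α z.α := by
  obtain ⟨-, -, -, -, h1, h2, h3, -⟩ := mem_factorizations_iff.1 hp
  have := x.hα
  have := y.hα
  exact ⟨⟨by omega, by omega, by omega⟩, ⟨by omega, by omega, by omega⟩⟩

lemma bijOn_factorizations (hT : BDTriple n Γ1 Γ2 T) {z : TPair n T Γ1} (hz : ROrient z) :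
    Set.BijOn (fun p => p.1.α.1) (factorizations z) (Set.Ioo z.α.1 z.α.2) := by
  refine ⟨?_, ?_, ?_⟩
  · rintro ⟨x, y⟩ hp
    obtain ⟨-, -, -, -, h1, h2, h3, -⟩ := mem_factorizations_iff.1 hp
    have := x.hα
    have := y.hα
    exact Set.mem_Ioo.2 ⟨by dsimp only; omega, by dsimp only; omega⟩
  · rintro ⟨x, y⟩ hp ⟨x', y'⟩ hp' (he : x.α.1 = x'.α.1)
    obtain ⟨hx, hy, hkx, hky, hx2, hy1, hxy, -⟩ := mem_factorizations_iff.1 hp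
    obtain ⟨hx', hy', hkx', hky', hx2', hy1', hxy', -⟩ := mem_factorizations_iff.1 hp'
    exact Prod.ext (TPair.ext_of_α (hx.trans hx'.symm) (hkx.trans hkx'.symm)
        (Prod.ext he (hx2.trans hx2'.symm)))
      (TPair.ext_of_α (hy.trans hy'.symm) (hky.trans hky'.symm)
        (Prod.ext (hy1.trans hy1'.symm) (hxy.symm.trans (he.trans hxy'))))
  · rintro m ⟨hm1, hm2⟩
    have hsize := z.size_β_eq hT
    refine ⟨(z.restrict hT hz (m, z.α.2) ⟨hm1.le, hm2, le_rfl⟩,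
      z.restrict hT hz (z.α.1, m) ⟨le_rfl, hm1, hm2.le⟩), ?_, rfl⟩
    refine mem_factorizations_iff.2 ⟨rfl, rfl, rfl, rfl, rfl, rfl, rfl, ?_, ?_, ?_⟩ <;>
      simp only [TPair.restrict, transport] <;> omega

lemma ncard_factorizations (hT : BDTriple n Γ1 Γ2 T) {z : TPair n T Γ1} (hz : ROrient z) :
    (factorizations z).ncard = z.α.2 - z.α.1 - 1 := by
  rw [(bijOn_factorizations hT hz).ncard_eq, Set.ncard_Ioo_nat]

lemma ROrient.of_mem_factorizations (hT : BDTriple n Γ1 Γ2 T) {z : TPair n T Γ1}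
    (hz : ROrient z) {x y : TPair n T Γ1} (hp : (x, y) ∈ factorizations z) :
    ROrient x ∧ ROrient y := by
  obtain ⟨hx, hy⟩ := isSubroot_of_mem_factorizations hp
  exact ⟨hz.of_isSubroot hT hp.2.2.1 hx, hz.of_isSubroot hT hp.2.2.2.1 hy⟩

end Factorizations

/-- If an orientation-reversing `T`-pair `z` has size `d = |z|` and order `k`, then
there are exactly `d - 1` ways of writing `E_z = E_x E_y` with `x, y` `T`-pairs of the
same sign as `z` and `Ord(x) = Ord(y) = k`; moreover in every such factorization both
`x` and `y` reverse orientation (`C_x = C_y = 1`). -/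
theorem reversed_factorization_count (n : ℕ) (Γ1 Γ2 : Finset ℕ) (T : ℕ → ℕ)
    (h : BDTriple n Γ1 Γ2 T) (z : TPair n T Γ1) (hz : ROrient z) :
    let S : Set (TPair n T Γ1 × TPair n T Γ1) :=
      {p | p.1.pos = z.pos ∧ p.2.pos = z.pos ∧ p.1.k = z.k ∧ p.2.k = z.k ∧
        Epair p.1 * Epair p.2 = Epair z}
    S.ncard = (z.α.2 - z.α.1) - 1 ∧ ∀ p ∈ S, ROrient p.1 ∧ ROrient p.2 :=
  ⟨ncard_factorizations h hz, fun ⟨_, _⟩ hp => hz.of_mem_factorizations h hp⟩
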